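/- For every real α one has ∫₀¹ |g(α,β;X)|⁴ dβ ≪ Σ_{1≤u₁,u₂≤2X} min{X, ‖6α u₁u₂‖^{−1}}, with an absolute implicit constant; here the sum is over integer pairs (u₁,u₂). -/

import Mathlib

/-!
Expanding `|g|⁴ = |g²|²` and integrating over `β` keeps exactly the quadruples with
`x₁ + x₂ = x₃ + x₄`. Writing `x₃ = x₁ - u₁`, `x₄ = x₁ - u₂` (so `x₂ = x₁ - u₁ - u₂`) gives
`x₁³ + x₂³ - x₃³ - x₄³ = 6u₁u₂x₁ - 3u₁u₂(u₁ + u₂)`, so for fixed `(u₁, u₂)` the sum over `x₁` is a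
geometric progression of length at most `X`, bounded by `min {X, ‖6αu₁u₂‖⁻¹}`. The resulting sum
over `|u₁|, |u₂| < X` folds onto positive `u` by symmetry; the `O(X²)` terms with `u₁u₂ = 0` are
absorbed because every term of the target sum is at least `1`.
-/

open MeasureTheory

/-- `e(z) = e^{2πiz}`. -/
noncomputable def e (z : ℝ) : ℂ := Complex.exp (2 * Real.pi * Complex.I * z)

/-- `g(α,β;X) = Σ_{1 ≤ x ≤ X} e(αx³ + βx)`. -/
noncomputable def g (α β X : ℝ) : ℂ :=
  ∑ x ∈ Finset.Icc 1 ⌊X⌋₊, e (α * (x : ℝ) ^ 3 + β * (x : ℝ))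

/-- The major arcs `𝔐(Q)` (relative to the parameter `X`). -/
def majorArcs (X Q : ℝ) : Set ℝ :=
  {α | α ∈ Set.Ico (0 : ℝ) 1 ∧ ∃ q : ℕ, ∃ a : ℤ, 0 < q ∧ 0 ≤ a ∧ (a : ℝ) ≤ (q : ℝ) ∧
    (q : ℝ) ≤ Q ∧ Int.gcd a (q : ℤ) = 1 ∧ |(q : ℝ) * α - (a : ℝ)| ≤ Q * X ^ (-3 : ℝ)}

/-- The minor arcs `𝔪(Q) = [0,1) \ 𝔐(Q)`. -/
def minorArcs (X Q : ℝ) : Set ℝ := Set.Ico (0 : ℝ) 1 \ majorArcs X Q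


/-- The distance from a real number to the nearest integer. -/
noncomputable def distNearestInt (t : ℝ) : ℝ := |t - (round t : ℝ)|

/-- min {X, ‖t‖⁻¹}, with the convention that this is X when ‖t‖ = 0. -/
noncomputable def minKernel (X t : ℝ) : ℝ :=
  if distNearestInt t = 0 then X else min X (distNearestInt t)⁻¹

open Finset

lemma e_add (s t : ℝ) : e (s + t) = e s * e t := by
  simp [e, mul_add, Complex.exp_add]

lemma e_eq_exp_mul_I (t : ℝ) : e t = Complex.exp (Complex.I * ↑(2 * Real.pi * t)) := by
  rw [e]; push_cast; ring_nf

lemma norm_e (t : ℝ) : ‖e t‖ = 1 := by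
  rw [e_eq_exp_mul_I, mul_comm, Complex.norm_exp_ofReal_mul_I]

lemma conj_e (t : ℝ) : starRingEnd ℂ (e t) = e (-t) := by
  rw [e_eq_exp_mul_I, e_eq_exp_mul_I, ← Complex.exp_conj, map_mul, Complex.conj_I,
    Complex.conj_ofReal]
  push_cast; ring_nf

lemma e_intCast (n : ℤ) : e n = 1 := by
  rw [e, ← Complex.exp_int_mul_two_pi_mul_I n]
  push_cast; ring_nf

lemma e_natCast_mul (n : ℕ) (t : ℝ) : e (n * t) = e t ^ n := by
  rw [e, e, ← Complex.exp_nat_mul]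
  push_cast; ring_nf

lemma continuous_e : Continuous e := by
  unfold e; fun_prop

lemma integral_e_mul_intCast (m : ℤ) :
    ∫ β in (0:ℝ)..1, e (β * m) = if m = 0 then 1 else 0 := by
  split_ifs with hm
  · simp [hm, e]
  · have hc : 2 * Real.pi * Complex.I * m ≠ 0 := by
      simp [Real.pi_ne_zero, Complex.I_ne_zero, hm]
    have he : ∀ β : ℝ, e (β * m) = Complex.exp (2 * Real.pi * Complex.I * m * β) := fun β => by
      rw [e]; push_cast; ring_nf
    simp only [he, integral_exp_mul_complex hc]
    have h1 : Complex.exp (2 * Real.pi * Complex.I * m) = 1 := by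
      rw [← Complex.exp_int_mul_two_pi_mul_I m]; ring_nf
    simp [h1]

lemma distNearestInt_eq_norm (t : ℝ) : distNearestInt t = ‖(t : UnitAddCircle)‖ :=
  (UnitAddCircle.norm_eq).symm

lemma distNearestInt_neg (t : ℝ) : distNearestInt (-t) = distNearestInt t := by
  rw [distNearestInt_eq_norm, distNearestInt_eq_norm, AddCircle.coe_neg, norm_neg]

lemma distNearestInt_le_half (t : ℝ) : distNearestInt t ≤ 1 / 2 := abs_sub_round t

lemma four_mul_distNearestInt_le_norm_e_sub_one (θ : ℝ) :
    4 * distNearestInt θ ≤ ‖e θ - 1‖ := by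
  set t := θ - round θ
  have hθ : e θ = e t := by
    rw [show θ = t + (round θ : ℤ) by ring, e_add, e_intCast, mul_one]
  have ht : |Real.pi * t| ≤ Real.pi / 2 := by
    rw [abs_mul, abs_of_pos Real.pi_pos]
    nlinarith [abs_sub_round θ, Real.pi_pos]
  have hsin := Real.mul_abs_le_abs_sin ht
  have hpi : 2 / Real.pi * |Real.pi * t| = 2 * |t| := by
    rw [abs_mul, abs_of_pos Real.pi_pos]; field_simp
  rw [hθ, e_eq_exp_mul_I, Complex.norm_exp_I_mul_ofReal_sub_one, norm_mul, Real.norm_eq_abs,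
    show 2 * Real.pi * t / 2 = Real.pi * t by ring, abs_two, Real.norm_eq_abs]
  change 4 * |t| ≤ _
  linarith

lemma two_mul_distNearestInt_mul_norm_sum_e_le (θ c : ℝ) (a b : ℕ) :
    2 * distNearestInt θ * ‖∑ x ∈ Ico a b, e (θ * x + c)‖ ≤ 1 := by
  rcases lt_or_ge b a with hab | hab
  · simp [Ico_eq_empty_of_le hab.le]
  have hsum : ∑ x ∈ Ico a b, e (θ * x + c) = e c * ∑ x ∈ Ico a b, e θ ^ x := by
    rw [mul_sum]
    refine sum_congr rfl fun x _ => ?_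
    rw [add_comm, e_add, mul_comm θ, e_natCast_mul]
  have htel : ‖∑ x ∈ Ico a b, e θ ^ x‖ * ‖e θ - 1‖ ≤ 2 := by
    rw [← norm_mul, geom_sum_Ico_mul _ hab]
    refine (norm_sub_le _ _).trans ?_
    simp only [norm_pow, norm_e, one_pow]
    norm_num
  have hdist := four_mul_distNearestInt_le_norm_e_sub_one θ
  have hd : 0 ≤ distNearestInt θ := abs_nonneg _
  rw [hsum, norm_mul, norm_e, one_mul]
  nlinarith [norm_nonneg (∑ x ∈ Ico a b, e θ ^ x)]

lemma minKernel_neg (X t : ℝ) : minKernel X (-t) = minKernel X t := by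
  rw [minKernel, minKernel, distNearestInt_neg]

lemma minKernel_zero (X : ℝ) : minKernel X 0 = X := by
  simp [minKernel, distNearestInt]

lemma minKernel_nonneg {X : ℝ} (hX : 0 ≤ X) (t : ℝ) : 0 ≤ minKernel X t := by
  unfold minKernel
  split_ifs
  · exact hX
  · exact le_min hX (inv_nonneg.mpr (abs_nonneg _))

lemma one_le_minKernel {X : ℝ} (hX : 1 ≤ X) (t : ℝ) : 1 ≤ minKernel X t := by
  unfold minKernel
  split_ifs with hd
  · exact hX
  · have hpos : 0 < distNearestInt t := (abs_nonneg _).lt_of_ne' hd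
    exact le_min hX ((one_le_inv₀ hpos).mpr ((distNearestInt_le_half t).trans (by norm_num)))

lemma norm_sum_Ico_e_le_minKernel (θ c X : ℝ) (a b : ℕ) (hcard : ((Ico a b).card : ℝ) ≤ X) :
    ‖∑ x ∈ Ico a b, e (θ * x + c)‖ ≤ minKernel X θ := by
  have htriv : ‖∑ x ∈ Ico a b, e (θ * x + c)‖ ≤ X :=
    (norm_sum_le _ _).trans (by simpa [norm_e] using hcard)
  unfold minKernel
  split_ifs with hd
  · exact htriv
  · have hpos : 0 < distNearestInt θ := (abs_nonneg _).lt_of_ne' hd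
    refine le_min htriv ?_
    rw [← one_div, le_div_iff₀ hpos]
    nlinarith [two_mul_distNearestInt_mul_norm_sum_e_le θ c a b,
      mul_nonneg hpos.le (norm_nonneg (∑ x ∈ Ico a b, e (θ * x + c)))]

lemma integral_norm_sum_mul_e_sq {ι : Type*} (s : Finset ι) (a : ι → ℂ) (n : ι → ℤ) :
    ((∫ β in (0:ℝ)..1, ‖∑ j ∈ s, a j * e (β * n j)‖ ^ 2 : ℝ) : ℂ) =
      ∑ j ∈ s, ∑ k ∈ s, if n j = n k then a j * starRingEnd ℂ (a k) else 0 := by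
  have hexpand : ∀ β : ℝ, ((‖∑ j ∈ s, a j * e (β * n j)‖ ^ 2 : ℝ) : ℂ) =
      ∑ j ∈ s, ∑ k ∈ s, a j * starRingEnd ℂ (a k) * e (β * ↑(n j - n k)) := by
    intro β
    rw [Complex.ofReal_pow, ← Complex.mul_conj', map_sum, sum_mul_sum]
    refine sum_congr rfl fun j _ => sum_congr rfl fun k _ => ?_
    rw [map_mul, conj_e, Int.cast_sub, mul_sub, sub_eq_add_neg, e_add]
    ring_nf
  have hcont : ∀ c : ℂ, ∀ m : ℤ, Continuous fun β : ℝ => c * e (β * m) :=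
    fun c m => continuous_const.mul (continuous_e.comp (by fun_prop))
  rw [← intervalIntegral.integral_ofReal]
  simp only [hexpand]
  rw [intervalIntegral.integral_finsetSum fun j _ => ?_]
  · refine sum_congr rfl fun j _ => ?_
    rw [intervalIntegral.integral_finsetSum fun k _ => (hcont _ _).intervalIntegrable _ _]
    refine sum_congr rfl fun k _ => ?_
    rw [intervalIntegral.integral_const_mul, integral_e_mul_intCast]
    simp [sub_eq_zero]
  · exact (continuous_finsetSum s fun k _ => hcont _ _).intervalIntegrable _ _

lemma g_sq (α β X : ℝ) : g α β X ^ 2 =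
    ∑ p ∈ Icc 1 ⌊X⌋₊ ×ˢ Icc 1 ⌊X⌋₊,
      e (α * ((p.1 : ℝ) ^ 3 + (p.2 : ℝ) ^ 3)) * e (β * ((p.1 + p.2 : ℕ) : ℤ)) := by
  rw [sq, g, sum_mul_sum, sum_product]
  refine sum_congr rfl fun x _ => sum_congr rfl fun y _ => ?_
  rw [← e_add, ← e_add]
  push_cast
  ring_nf

-- The `x` for which `x`, `x - u₁`, `x - u₂` and `x - u₁ - u₂` all lie in `[1, N]`.
def fiberRange (N : ℕ) (u₁ u₂ : ℤ) : Finset ℕ :=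
  Ico (max 1 (max (1 + u₁) (max (1 + u₂) (1 + u₁ + u₂)))).toNat
    (min ((N : ℤ) + 1) (min (N + 1 + u₁) (min (N + 1 + u₂) (N + 1 + u₁ + u₂)))).toNat

lemma sum_sum_ite_add_eq_add {M : Type*} [AddCommMonoid M] (N : ℕ) (F : ℤ → ℤ → ℤ → ℤ → M) :
    ∑ p ∈ Icc 1 N ×ˢ Icc 1 N, ∑ q ∈ Icc 1 N ×ˢ Icc 1 N,
        (if p.1 + p.2 = q.1 + q.2 then F p.1 p.2 q.1 q.2 else 0) =
      ∑ u ∈ Icc (-((N - 1 : ℕ) : ℤ)) (N - 1 : ℕ) ×ˢ Icc (-((N - 1 : ℕ) : ℤ)) (N - 1 : ℕ),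
        ∑ x ∈ fiberRange N u.1 u.2, F x (x - u.1 - u.2) (x - u.1) (x - u.2) := by
  rw [← sum_product', ← sum_filter, sum_sigma']
  refine sum_nbij' (fun pq => ⟨((pq.1.1 : ℤ) - pq.2.1, (pq.1.1 : ℤ) - pq.2.2), pq.1.1⟩)
    (fun ux => ((ux.2, (ux.2 - ux.1.1 - ux.1.2 : ℤ).toNat),
      ((ux.2 - ux.1.1 : ℤ).toNat, (ux.2 - ux.1.2 : ℤ).toNat))) ?_ ?_ ?_ ?_ ?_
  · rintro ⟨⟨p₁, p₂⟩, ⟨q₁, q₂⟩⟩ h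
    simp only [mem_filter, mem_product, mem_Icc, mem_sigma, fiberRange, mem_Ico, Int.toNat_le,
      Int.lt_toNat, max_le_iff, lt_min_iff] at h ⊢
    omega
  · rintro ⟨⟨u₁, u₂⟩, x⟩ h
    simp only [mem_filter, mem_product, mem_Icc, mem_sigma, fiberRange, mem_Ico, Int.toNat_le,
      Int.lt_toNat, max_le_iff, lt_min_iff] at h ⊢
    omega
  · rintro ⟨⟨p₁, p₂⟩, ⟨q₁, q₂⟩⟩ h
    simp only [mem_filter, mem_product, mem_Icc] at h
    have hp₂ : (p₁ : ℤ) - (p₁ - q₁) - (p₁ - q₂) = p₂ := by omega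
    simp only [Prod.mk.injEq, hp₂]
    simp
  · rintro ⟨⟨u₁, u₂⟩, x⟩ h
    simp only [mem_product, mem_Icc, mem_sigma, fiberRange, mem_Ico, Int.toNat_le, Int.lt_toNat,
      max_le_iff, lt_min_iff, Sigma.mk.injEq, Prod.mk.injEq, heq_eq_eq, Int.ofNat_toNat] at h ⊢
    rw [max_eq_left (by omega : (0 : ℤ) ≤ x - u₁), max_eq_left (by omega : (0 : ℤ) ≤ x - u₂)]
    simp
  · rintro ⟨⟨p₁, p₂⟩, ⟨q₁, q₂⟩⟩ h
    simp only [mem_filter, mem_product, mem_Icc] at h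
    dsimp only
    congr 1 <;> omega

lemma card_fiberRange_le (N : ℕ) (u₁ u₂ : ℤ) : (fiberRange N u₁ u₂).card ≤ N := by
  calc (fiberRange N u₁ u₂).card ≤ (Ico 1 (N + 1)).card := card_le_card fun x hx => by
        simp only [fiberRange, mem_Ico, Int.toNat_le, Int.lt_toNat, max_le_iff, lt_min_iff] at hx ⊢
        omega
    _ = N := by simp

lemma sum_Icc_neg_self_of_even {M : Type*} [AddCommMonoid M] (f : ℤ → M) (hf : ∀ k, f (-k) = f k)
    (n : ℕ) : ∑ k ∈ Icc (-(n : ℤ)) n, f k = f 0 + 2 • ∑ k ∈ Icc 1 n, f k := by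
  induction n with
  | zero => simp
  | succ n ih =>
    have hIcc : Icc (-((n + 1 : ℕ) : ℤ)) (n + 1 : ℕ) =
        insert (-((n + 1 : ℕ) : ℤ)) (insert ((n + 1 : ℕ) : ℤ) (Icc (-(n : ℤ)) n)) := by
      ext k; simp only [mem_insert, mem_Icc]; omega
    rw [hIcc, sum_insert (by simp only [mem_insert, mem_Icc]; omega), sum_insert (by simp), ih, hf,
      sum_Icc_succ_top (by omega), smul_add, two_smul ℕ (f _)]
    abel

lemma sum_Icc_neg_minKernel_mul (t X : ℝ) (n : ℕ) :
    ∑ b ∈ Icc (-(n : ℤ)) n, minKernel X (t * b) = X + 2 * ∑ b ∈ Icc 1 n, minKernel X (t * b) := by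
  rw [sum_Icc_neg_self_of_even (fun b : ℤ => minKernel X (t * b))
    (fun b => by rw [Int.cast_neg, mul_neg, minKernel_neg])]
  simp [minKernel_zero]

lemma sum_Icc_neg_sq_minKernel (c X : ℝ) (n : ℕ) :
    ∑ u ∈ Icc (-(n : ℤ)) n ×ˢ Icc (-(n : ℤ)) n, minKernel X (c * u.1 * u.2) =
      (4 * n + 1) * X + 4 * ∑ a ∈ Icc 1 n, ∑ b ∈ Icc 1 n, minKernel X (c * a * b) := by
  have hcard : ((Icc (-(n : ℤ)) n).card : ℝ) = 2 * n + 1 := by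
    rw [Int.card_Icc, show ((n : ℤ) + 1 - -(n : ℤ)).toNat = 2 * n + 1 by omega]; push_cast; ring
  have hcol : ∀ b : ℕ, ∑ a ∈ Icc (-(n : ℤ)) n, minKernel X (c * a * b) =
      X + 2 * ∑ a ∈ Icc 1 n, minKernel X (c * a * b) := fun b => by
    simp only [mul_right_comm c _ (b : ℝ)]
    exact sum_Icc_neg_minKernel_mul _ X n
  rw [sum_product]
  simp only [sum_Icc_neg_minKernel_mul, sum_add_distrib, ← mul_sum]
  rw [sum_comm]
  simp only [hcol, sum_add_distrib, ← mul_sum, sum_const, nsmul_eq_mul, hcard, Nat.card_Icc]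
  rw [sum_comm]
  push_cast
  ring

lemma sum_Icc_neg_sq_minKernel_le (c : ℝ) {X : ℝ} (hX : 1 ≤ X) {n M : ℕ} (hn : 2 * n + 1 ≤ M)
    (hXM : X ≤ M) :
    ∑ u ∈ Icc (-(n : ℤ)) n ×ˢ Icc (-(n : ℤ)) n, minKernel X (c * u.1 * u.2) ≤
      6 * ∑ a ∈ Icc 1 M, ∑ b ∈ Icc 1 M, minKernel X (c * a * b) := by
  have hK : ∀ t, 0 ≤ minKernel X t := minKernel_nonneg (by linarith)
  have hsq : (M : ℝ) * M ≤ ∑ a ∈ Icc 1 M, ∑ b ∈ Icc 1 M, minKernel X (c * a * b) := by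
    calc (M : ℝ) * M = ∑ a ∈ Icc 1 M, ∑ b ∈ Icc 1 M, (1 : ℝ) := by simp
      _ ≤ _ := sum_le_sum fun a _ => sum_le_sum fun b _ => one_le_minKernel hX _
  have hsub : ∑ a ∈ Icc 1 n, ∑ b ∈ Icc 1 n, minKernel X (c * a * b) ≤
      ∑ a ∈ Icc 1 M, ∑ b ∈ Icc 1 M, minKernel X (c * a * b) := by
    have hnM : Icc 1 n ⊆ Icc 1 M := Icc_subset_Icc_right (by omega)
    calc _ ≤ ∑ a ∈ Icc 1 n, ∑ b ∈ Icc 1 M, minKernel X (c * a * b) :=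
          sum_le_sum fun a _ => sum_le_sum_of_subset_of_nonneg hnM fun b _ _ => hK _
      _ ≤ _ := sum_le_sum_of_subset_of_nonneg hnM fun a _ _ => sum_nonneg fun b _ => hK _
  have hdiag : (4 * n + 1 : ℝ) * X ≤ 2 * (M * M) := by
    have : (4 * n + 1 : ℝ) ≤ 2 * M := by exact_mod_cast (by omega : 4 * n + 1 ≤ 2 * M)
    nlinarith
  rw [sum_Icc_neg_sq_minKernel]
  linarith

lemma integral_norm_g_pow_four (α X : ℝ) :
    ((∫ β in (0:ℝ)..1, ‖g α β X‖ ^ 4 : ℝ) : ℂ) =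
      ∑ u ∈ Icc (-((⌊X⌋₊ - 1 : ℕ) : ℤ)) (⌊X⌋₊ - 1 : ℕ) ×ˢ
          Icc (-((⌊X⌋₊ - 1 : ℕ) : ℤ)) (⌊X⌋₊ - 1 : ℕ),
        ∑ x ∈ fiberRange ⌊X⌋₊ u.1 u.2,
          e (6 * α * u.1 * u.2 * x + -3 * α * u.1 * u.2 * (u.1 + u.2)) := by
  have hsq : ∀ β, ‖g α β X‖ ^ 4 = ‖∑ p ∈ Icc 1 ⌊X⌋₊ ×ˢ Icc 1 ⌊X⌋₊,
      e (α * ((p.1 : ℝ) ^ 3 + (p.2 : ℝ) ^ 3)) * e (β * ((p.1 + p.2 : ℕ) : ℤ))‖ ^ 2 := fun β => by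
    rw [← g_sq, norm_pow, ← pow_mul]
  simp only [hsq]
  rw [integral_norm_sum_mul_e_sq]
  refine .trans ?_ ((sum_sum_ite_add_eq_add ⌊X⌋₊
    fun i j k l => e (α * ((i : ℝ) ^ 3 + (j : ℝ) ^ 3 - (k : ℝ) ^ 3 - (l : ℝ) ^ 3))).trans ?_)
  · refine sum_congr rfl fun p _ => sum_congr rfl fun q _ => ?_
    simp only [conj_e, ← e_add, Nat.cast_inj, Int.cast_natCast]
    ring_nf
  · refine sum_congr rfl fun u _ => sum_congr rfl fun x _ => ?_
    push_cast
    ring_nf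

lemma integral_norm_g_pow_four_le {X : ℝ} (hX : 0 ≤ X) (α : ℝ) :
    ∫ β in (0:ℝ)..1, ‖g α β X‖ ^ 4 ≤
      ∑ u ∈ Icc (-((⌊X⌋₊ - 1 : ℕ) : ℤ)) (⌊X⌋₊ - 1 : ℕ) ×ˢ
          Icc (-((⌊X⌋₊ - 1 : ℕ) : ℤ)) (⌊X⌋₊ - 1 : ℕ),
        minKernel X (6 * α * u.1 * u.2) := by
  calc ∫ β in (0:ℝ)..1, ‖g α β X‖ ^ 4
      = ((∫ β in (0:ℝ)..1, ‖g α β X‖ ^ 4 : ℝ) : ℂ).re := (Complex.ofReal_re _).symm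
    _ ≤ ‖((∫ β in (0:ℝ)..1, ‖g α β X‖ ^ 4 : ℝ) : ℂ)‖ := Complex.re_le_norm _
    _ ≤ _ := by
      rw [integral_norm_g_pow_four]
      refine (norm_sum_le _ _).trans (sum_le_sum fun u _ => ?_)
      exact norm_sum_Ico_e_le_minKernel _ _ _ _ _
        ((Nat.cast_le.mpr (card_fiberRange_le _ _ _)).trans (Nat.floor_le hX))

/-- ∫₀¹ |g(α,β)|⁴ dβ ≪ Σ_{1 ≤ u₁,u₂ ≤ 2X} min{X, ‖6αu₁u₂‖⁻¹}. -/
theorem fourth_moment_beta_divisor_bound :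
    ∃ C : ℝ, 0 < C ∧ ∀ X α : ℝ, 1 ≤ X →
      (∫ β in (0:ℝ)..1, ‖g α β X‖ ^ 4) ≤
        C * ∑ u₁ ∈ Finset.Icc 1 ⌊2 * X⌋₊, ∑ u₂ ∈ Finset.Icc 1 ⌊2 * X⌋₊,
          minKernel X (6 * α * (u₁ : ℝ) * (u₂ : ℝ)) := by
  refine ⟨6, by norm_num, fun X α hX => ?_⟩
  have hN : 1 ≤ ⌊X⌋₊ := Nat.one_le_floor_iff _ |>.mpr hX
  have h2N : 2 * ⌊X⌋₊ ≤ ⌊2 * X⌋₊ :=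
    Nat.le_floor (by push_cast; linarith [Nat.floor_le (by linarith : (0 : ℝ) ≤ X)])
  have hXM : X ≤ ⌊2 * X⌋₊ := by linarith [Nat.lt_floor_add_one (2 * X)]
  exact (integral_norm_g_pow_four_le (by linarith) α).trans
    (sum_Icc_neg_sq_minKernel_le (6 * α) hX (by omega) hXM)
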